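/- arXiv:1905.13685 — 6 statements merged into one kernel-verified Lean document; each statement's English description precedes it below -/
import Mathlib

section
/- Each row of the matrix D formed by stacking the vectorized worker-node outputs of a Polynomial code is a codeword of a Reed-Solomon code of length N and dimension mn; equivalently, the Polynomial code is an interleaved Reed-Solomon code with L = rr'/(mn) component RS codewords sharing the same evaluation points. -/
open Polynomial Matrix

/-- Each row of the stacked vectorized worker outputs of a Polynomial code is a codeword
of an RS code of length N and dimension mn: the Polynomial code is an interleaved RS code. -/
theorem polynomial_code_is_IRS (F : Type) [Field F] (s a b m n N : ℕ)
    (A : Fin m → Matrix (Fin s) (Fin a) F)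
    (B : Fin n → Matrix (Fin s) (Fin b) F)
    (x : Fin N → F) (hx : Function.Injective x)
    (C : Fin N → Matrix (Fin a) (Fin b) F)
    (hC : ∀ i, C i = ∑ j : Fin m, ∑ k : Fin n,
      (x i ^ ((j : ℕ) + (k : ℕ) * m)) • ((A j)ᵀ * B k))
    (D : Matrix (Fin a × Fin b) (Fin N) F)
    (hD : ∀ p : Fin a × Fin b, ∀ i, D p i = C i p.1 p.2) :
    ∀ p : Fin a × Fin b, ∃ P : F[X], P.degree < (m * n : ℕ) ∧
      ∀ i, D p i = P.eval (x i) := by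
  intro p
  refine ⟨∑ j : Fin m, ∑ k : Fin n,
    Polynomial.C (((A j)ᵀ * B k) p.1 p.2) * Polynomial.X ^ ((j : ℕ) + (k : ℕ) * m),
    ?_, ?_⟩
  · apply lt_of_le_of_lt (Polynomial.degree_sum_le _ _)
    apply Finset.sup_lt_iff (by exact_mod_cast WithBot.bot_lt_coe _) |>.mpr
    intro j _
    apply lt_of_le_of_lt (Polynomial.degree_sum_le _ _)
    apply Finset.sup_lt_iff (by exact_mod_cast WithBot.bot_lt_coe _) |>.mpr
    intro k _
    apply lt_of_le_of_lt (Polynomial.degree_C_mul_X_pow_le _ _)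
    have hj := j.is_lt
    have hk := k.is_lt
    have : (j : ℕ) + (k : ℕ) * m < m * n := by
      have h1 : (j : ℕ) + (k : ℕ) * m + 1 ≤ m + (k : ℕ) * m := by omega
      have h2 : m + (k : ℕ) * m = ((k : ℕ) + 1) * m := by ring
      have h3 : ((k : ℕ) + 1) * m ≤ n * m := Nat.mul_le_mul_right m hk
      have h4 : n * m = m * n := Nat.mul_comm n m
      omega
    exact_mod_cast this
  · intro i
    rw [hD, hC]
    rw [Matrix.sum_apply, eval_finset_sum]
    refine Finset.sum_congr rfl fun j _ => ?_
    rw [Matrix.sum_apply, eval_finset_sum]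
    refine Finset.sum_congr rfl fun k _ => ?_
    rw [Matrix.smul_apply, smul_eq_mul, eval_mul, eval_C, eval_pow, eval_X, mul_comm]
end

section
/- The recovery threshold of the Polynomial code is mn: given the values P(x_i) at any mn distinct points x_i ∈ F, the polynomial P of degree at most mn-1 (and hence the matrix product A^T B) is uniquely determined. -/
open Polynomial

/-- Recovery threshold of the Polynomial code is mn: any two polynomials of degree < mn
agreeing on mn distinct points are equal. -/
theorem polynomial_code_recovery_threshold (F : Type) [Field F] (m n : ℕ)
    (hm : 0 < m) (hn : 0 < n)
    (x : Fin (m * n) → F) (hx : Function.Injective x)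
    (P Q : F[X]) (hP : P.degree < (m * n : ℕ)) (hQ : Q.degree < (m * n : ℕ))
    (h : ∀ i, P.eval (x i) = Q.eval (x i)) : P = Q := by
  apply Polynomial.eq_of_degrees_lt_of_eval_index_eq (Finset.univ : Finset (Fin (m * n))) (v := x)
    (Set.injOn_of_injective hx)
  · simpa using hP
  · simpa using hQ
  · exact fun i _ => h i
end

section
/- For the interleaved Reed-Solomon code of length N, dimension K over F_q with L interleaved codewords, under the uniform random error model where the t nonzero error columns are uniform over nonzero vectors of F_q^L, the probability of undetected error of any decoder with the maximum-likelihood certificate property tends to 0 as q^L → ∞, for every t ≤ N - K - 1. -/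
/-!
If `D + E` lies within column distance `t` of a codeword `D' ≠ D`, then `C = D' - D` is a nonzero
codeword agreeing with `E` outside a set `T` of at most `t` columns, so `C` is supported on `S ∪ T`
where `S` is the column support of `E`. A nonzero codeword has more than `N - K` nonzero columns,
so there are at most `q ^ (L * (|S ∪ T| - (N - K)))` choices for `C`, and `E` is then determined
by its columns in `S ∩ T`. Summing over the `4 ^ N` pairs `(S, T)` and using `t ≤ N - K - 1`
bounds the confusable errors by `4 ^ N * q ^ (L * (t - 1))`, against at least
`(q ^ L - 1) ^ t ≥ (q ^ L / 2) ^ t` errors of weight `t`: the ratio is at most `8 ^ N / q ^ L`.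
-/

open Polynomial

namespace InterleavedRS

open Fintype (card)

section Columns

variable {Λ ι R : Type*}

def colSupport [Zero R] (E : Matrix Λ ι R) : Set ι := {i | (fun l => E l i) ≠ 0}

def colDiff (A B : Matrix Λ ι R) : Set ι := {i | (fun l => A l i) ≠ (fun l => B l i)}

variable (Λ ι R) in
def errorsOfWeight [Zero R] (t : ℕ) : Set (Matrix Λ ι R) := {E | (colSupport E).ncard = t}

lemma colSupport_subset_iff [Zero R] {E : Matrix Λ ι R} {s : Set ι} :
    colSupport E ⊆ s ↔ ∀ i ∉ s, ∀ l, E l i = 0 := by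
  simp only [Set.subset_def, colSupport, Set.mem_ofPred_eq, ne_eq, funext_iff]
  exact forall_congr' fun i => not_imp_comm

lemma colDiff_subset_iff {A B : Matrix Λ ι R} {s : Set ι} :
    colDiff A B ⊆ s ↔ ∀ i ∉ s, ∀ l, A l i = B l i := by
  simp only [Set.subset_def, colDiff, Set.mem_ofPred_eq, ne_eq, funext_iff]
  exact forall_congr' fun i => not_imp_comm

lemma colSupport_subset_union_colDiff [Zero R] (A B : Matrix Λ ι R) :
    colSupport B ⊆ colSupport A ∪ colDiff A B := by
  intro i hi
  by_contra h
  simp only [Set.mem_union, colSupport, colDiff, Set.mem_ofPred_eq, not_or, not_not] at h hi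
  exact hi (h.2 ▸ h.1)

lemma colDiff_add_left [AddCommGroup R] (D E D' : Matrix Λ ι R) :
    colDiff (D + E) D' = colDiff E (D' - D) := by
  ext i
  simp only [colDiff, Set.mem_ofPred_eq, ne_eq, funext_iff, Matrix.add_apply, Matrix.sub_apply,
    eq_sub_iff_add_eq']

variable [Fintype Λ] [Fintype R]

lemma ncard_le_of_injOn_restrict (W : Finset ι) {S : Set (Matrix Λ ι R)}
    (h : S.InjOn fun X l (i : W) => X l i) :
    S.ncard ≤ card R ^ (card Λ * W.card) := by
  calc S.ncard ≤ (Set.univ : Set (Λ → W → R)).ncard :=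
        Set.ncard_le_ncard_of_injOn _ (fun _ _ => Set.mem_univ _) h (Set.toFinite _)
    _ = card R ^ (card Λ * W.card) := by
        rw [Set.ncard_univ, Nat.card_fun, Nat.card_fun, Nat.card_eq_fintype_card (α := R),
          Nat.card_eq_fintype_card (α := Λ), Nat.card_eq_finsetCard, ← pow_mul, mul_comm]

lemma ncard_colSupport_subset_le [Zero R] (W : Finset ι) :
    {X : Matrix Λ ι R | colSupport X ⊆ W}.ncard ≤
      card R ^ (card Λ * W.card) := by
  refine ncard_le_of_injOn_restrict W fun X hX Y hY hXY => Matrix.ext fun l i => ?_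
  by_cases hi : i ∈ W
  · exact congrFun (congrFun hXY l) ⟨i, hi⟩
  · rw [colSupport_subset_iff.mp hX i hi, colSupport_subset_iff.mp hY i hi]

lemma ncard_errorsOfWeight_ge [Zero R] [Fintype ι] {t : ℕ}
    (ht : t ≤ card ι) :
    (card R ^ card Λ - 1) ^ t ≤ (errorsOfWeight Λ ι R t).ncard := by
  classical
  obtain ⟨S, -, hS⟩ := Finset.exists_subset_card_eq (s := Finset.univ) (n := t) (by simpa)
  let place : (S → {v : Λ → R // v ≠ 0}) → Matrix Λ ι R :=
    fun f l i => if h : i ∈ S then (f ⟨i, h⟩ : Λ → R) l else 0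
  have place_col (f) (i : S) : (fun l => place f l i) = f i := by
    funext l; simp [place]
  have colSupport_place (f) : colSupport (place f) = S := by
    ext i
    by_cases hi : i ∈ S
    · simpa [colSupport, hi, place_col f ⟨i, hi⟩] using (f ⟨i, hi⟩).2
    · simp [colSupport, hi, place, funext_iff]
  calc (card R ^ card Λ - 1) ^ t
      = card (S → {v : Λ → R // v ≠ 0}) := by
        rw [Fintype.card_fun, Fintype.card_coe, hS, Fintype.card_subtype_compl,
          Fintype.card_subtype_eq, Fintype.card_fun]
    _ = (Set.univ : Set (S → {v : Λ → R // v ≠ 0})).ncard := by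
        rw [Set.ncard_univ, Nat.card_eq_fintype_card]
    _ ≤ (errorsOfWeight Λ ι R t).ncard := by
        refine Set.ncard_le_ncard_of_injOn place (fun f _ => ?_) ?_ (Set.toFinite _)
        · simp [errorsOfWeight, colSupport_place, hS]
        · rintro f - g - hfg
          funext i
          exact Subtype.ext ((place_col f i).symm.trans (hfg ▸ place_col g i))

end Columns

section Codewords

variable {F Λ ι : Type*} [Field F] {α : ι → F} {K : ℕ}

def IsCodeword (α : ι → F) (K : ℕ) (C : Matrix Λ ι F) : Prop :=
  ∀ l, ∃ p : F[X], p.degree < (K : ℕ) ∧ ∀ i, C l i = p.eval (α i)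

lemma isCodeword_zero : IsCodeword α K (0 : Matrix Λ ι F) :=
  fun _ => ⟨0, by simp, fun _ => by simp⟩

lemma IsCodeword.sub {C D : Matrix Λ ι F} (hC : IsCodeword α K C) (hD : IsCodeword α K D) :
    IsCodeword α K (C - D) := by
  intro l
  obtain ⟨p, hp, hpC⟩ := hC l
  obtain ⟨r, hr, hrD⟩ := hD l
  refine ⟨p - r, (degree_sub_le p r).trans_lt (max_lt hp hr), fun i => ?_⟩
  simp [hpC, hrD]

lemma IsCodeword.eq_of_eqOn (hα : Function.Injective α) {C D : Matrix Λ ι F}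
    (hC : IsCodeword α K C) (hD : IsCodeword α K D) (V : Finset ι) (hV : K ≤ V.card)
    (h : ∀ i ∈ V, ∀ l, C l i = D l i) : C = D := by
  ext l i
  obtain ⟨p, hp, hpC⟩ := hC l
  obtain ⟨r, hr, hrD⟩ := hD l
  have hK : ((K : ℕ) : WithBot ℕ) ≤ V.card := by exact_mod_cast hV
  have : p = r := eq_of_degrees_lt_of_eval_index_eq V hα.injOn (hp.trans_le hK)
    (hr.trans_le hK) fun j hj => by rw [← hpC, ← hrD, h j hj l]
  rw [hpC, hrD, this]

/-- A decoder with the ML certificate property can output a wrong codeword only on these errors: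
its output is no farther from `D + E` than `D` is. -/
def confusableErrors (α : ι → F) (K : ℕ) (D : Matrix Λ ι F) (t : ℕ) :
    Set (Matrix Λ ι F) :=
  {E | (colSupport E).ncard = t ∧
    ∃ D', IsCodeword α K D' ∧ D' ≠ D ∧ (colDiff (D + E) D').ncard ≤ t}

def errorsNearCodeword (α : ι → F) (K : ℕ) (S T : Finset ι) : Set (Matrix Λ ι F) :=
  {E | colSupport E ⊆ S ∧ ∃ C, IsCodeword α K C ∧ C ≠ 0 ∧ colDiff E C ⊆ T}

lemma errorsNearCodeword_subset_image [DecidableEq ι] (S T : Finset ι) :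
    errorsNearCodeword α K S T ⊆
      (fun CX : Matrix Λ ι F × Matrix Λ ι F => fun l i =>
          if i ∈ T then CX.2 l i else CX.1 l i) ''
        ({C | IsCodeword α K C ∧ colSupport C ⊆ ↑(S ∪ T)} ×ˢ
          {X | colSupport X ⊆ ↑(S ∩ T)}) := by
  rintro E ⟨hES, C, hC, -, hECT⟩
  refine ⟨(C, fun l i => if i ∈ T then E l i else 0), ⟨⟨hC, ?_⟩, ?_⟩, ?_⟩
  · refine (colSupport_subset_union_colDiff E C).trans ?_
    push_cast
    exact Set.union_subset_union hES hECT
  · refine colSupport_subset_iff.mpr fun i hi l => ?_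
    by_cases hiT : i ∈ T
    · simpa [hiT] using colSupport_subset_iff.mp hES i (fun hiS => hi (by simp [hiS, hiT])) l
    · simp [hiT]
  · ext l i
    by_cases hiT : i ∈ T
    · simp [hiT]
    · simp [hiT, colDiff_subset_iff.mp hECT i hiT l]

lemma confusableErrors_subset_biUnion [Fintype ι] {D : Matrix Λ ι F} (hD : IsCodeword α K D)
    (t : ℕ) :
    confusableErrors α K D t ⊆
      ⋃ ST ∈ Finset.univ.filter
          (fun ST : Finset ι × Finset ι => ST.1.card = t ∧ ST.2.card ≤ t),
        errorsNearCodeword α K ST.1 ST.2 := by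
  rintro E ⟨hE, D', hD', hne, hdist⟩
  rw [colDiff_add_left] at hdist
  obtain ⟨S, hS⟩ := (Set.toFinite (colSupport E)).exists_finset_coe
  obtain ⟨T, hT⟩ := (Set.toFinite (colDiff E (D' - D))).exists_finset_coe
  refine Set.mem_biUnion (x := (S, T)) ?_
    ⟨hS.ge, D' - D, hD'.sub hD, sub_ne_zero.mpr hne, hT.ge⟩
  simp [← Set.ncard_coe_finset, hS, hT, hE, hdist]

variable [Fintype ι] [DecidableEq ι]

lemma IsCodeword.eq_zero_of_colSupport_subset (hα : Function.Injective α) {C : Matrix Λ ι F}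
    (hC : IsCodeword α K C) {U : Finset ι} (hCU : colSupport C ⊆ U)
    (hU : U.card + K ≤ card ι) : C = 0 :=
  hC.eq_of_eqOn hα isCodeword_zero Uᶜ (by rw [Finset.card_compl]; omega) fun i hi =>
    colSupport_subset_iff.mp hCU i (by simpa using hi)

variable [Fintype Λ] [Fintype F]

lemma ncard_codewords_colSupport_subset_le (hα : Function.Injective α)
    (hK : K ≤ card ι) (U : Finset ι) :
    {C : Matrix Λ ι F | IsCodeword α K C ∧ colSupport C ⊆ U}.ncard ≤
      card F ^ (card Λ * (U.card - (card ι - K))) := by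
  obtain ⟨W, hWU, hW⟩ := U.exists_subset_card_eq (Nat.sub_le _ (card ι - K))
  rw [← hW]
  apply ncard_le_of_injOn_restrict W
  rintro C ⟨hC, hCU⟩ D ⟨hD, hDU⟩ hCD
  have hUcard := U.card_le_univ
  refine hC.eq_of_eqOn hα hD (Uᶜ ∪ W) ?_ fun i hi l => ?_
  · rw [Finset.card_union_of_disjoint (disjoint_compl_left.mono_right hWU),
      Finset.card_compl, hW]
    omega
  · rcases Finset.mem_union.mp hi with hi | hi
    · rw [colSupport_subset_iff.mp hCU i (by simpa using hi),
        colSupport_subset_iff.mp hDU i (by simpa using hi)]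
    · exact congrFun (congrFun hCD l) ⟨i, hi⟩

lemma ncard_errorsNearCodeword_mul_le (hα : Function.Injective α) (hK : K ≤ card ι)
    (S T : Finset ι) :
    (errorsNearCodeword (Λ := Λ) α K S T).ncard * card F ^ card Λ ≤
      card F ^ (card Λ * (S.card + T.card + K + 1 - card ι)) := by
  rcases (errorsNearCodeword (Λ := Λ) α K S T).eq_empty_or_nonempty with
    hempty | ⟨E, hES, C, hC, hC0, hECT⟩
  · simp [hempty]
  have hlarge : card ι < (S ∪ T).card + K := by
    by_contra! h
    refine hC0 (hC.eq_zero_of_colSupport_subset hα ?_ h)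
    refine (colSupport_subset_union_colDiff E C).trans ?_
    push_cast
    exact Set.union_subset_union hES hECT
  have hunion := Finset.card_union_add_card_inter S T
  calc (errorsNearCodeword α K S T).ncard * card F ^ card Λ
      ≤ ({C : Matrix Λ ι F | IsCodeword α K C ∧ colSupport C ⊆ ↑(S ∪ T)}.ncard *
          {X : Matrix Λ ι F | colSupport X ⊆ ↑(S ∩ T)}.ncard) * card F ^ card Λ := by
        gcongr
        rw [← Set.ncard_prod]
        exact (Set.ncard_le_ncard (errorsNearCodeword_subset_image S T)).trans Set.ncard_image_le
    _ ≤ (card F ^ (card Λ * ((S ∪ T).card - (card ι - K))) *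
          card F ^ (card Λ * (S ∩ T).card)) * card F ^ card Λ := by
        gcongr
        · exact ncard_codewords_colSupport_subset_le hα hK _
        · exact ncard_colSupport_subset_le _
    _ = card F ^ (card Λ * (S.card + T.card + K + 1 - card ι)) := by
        rw [← pow_add, ← pow_add, ← mul_add, ← mul_add_one]
        congr 2
        omega

lemma ncard_confusableErrors_mul_le (hα : Function.Injective α) {D : Matrix Λ ι F}
    (hD : IsCodeword α K D) {t : ℕ} (ht : t + K < card ι) :
    (confusableErrors α K D t).ncard * card F ^ card Λ ≤
      4 ^ card ι * card F ^ (card Λ * t) := by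
  set pairs :=
    Finset.univ.filter (fun ST : Finset ι × Finset ι => ST.1.card = t ∧ ST.2.card ≤ t)
  have hpairs : pairs.card ≤ 4 ^ card ι := by
    refine (Finset.card_filter_le _ _).trans_eq ?_
    rw [Finset.card_univ, Fintype.card_prod, Fintype.card_finset, ← mul_pow]
    norm_num
  calc (confusableErrors α K D t).ncard * card F ^ card Λ
      ≤ (∑ ST ∈ pairs, (errorsNearCodeword (Λ := Λ) α K ST.1 ST.2).ncard) *
          card F ^ card Λ := by
        gcongr
        exact (Set.ncard_le_ncard (confusableErrors_subset_biUnion hD t)).trans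
          (Finset.set_ncard_biUnion_le _ _)
    _ = ∑ ST ∈ pairs, (errorsNearCodeword (Λ := Λ) α K ST.1 ST.2).ncard *
          card F ^ card Λ := Finset.sum_mul _ _ _
    _ ≤ ∑ _ST ∈ pairs, card F ^ (card Λ * t) := by
        refine Finset.sum_le_sum fun ST hST => ?_
        obtain ⟨hS, hT⟩ := (Finset.mem_filter.mp hST).2
        refine (ncard_errorsNearCodeword_mul_le hα (by omega) ST.1 ST.2).trans ?_
        exact Nat.pow_le_pow_right Fintype.card_pos (by gcongr; omega)
    _ ≤ 4 ^ card ι * card F ^ (card Λ * t) := by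
        rw [Finset.sum_const, smul_eq_mul]
        gcongr

lemma ncard_confusableErrors_mul_le_ncard_errorsOfWeight [Nonempty Λ] (hα : Function.Injective α)
    {D : Matrix Λ ι F} (hD : IsCodeword α K D) {t : ℕ} (ht : t + K < card ι) :
    (confusableErrors α K D t).ncard * card F ^ card Λ ≤
      8 ^ card ι * (errorsOfWeight Λ ι F t).ncard := by
  set M := card F ^ card Λ
  have hM : 2 ≤ M := Fintype.one_lt_card.trans_le (Nat.le_self_pow Fintype.card_ne_zero _)
  calc (confusableErrors α K D t).ncard * M ≤ 4 ^ card ι * M ^ t := by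
        simpa only [M, pow_mul] using ncard_confusableErrors_mul_le hα hD ht
    _ ≤ 4 ^ card ι * (2 ^ t * (M - 1) ^ t) := by
        rw [← mul_pow]
        gcongr
        omega
    _ ≤ 4 ^ card ι * (2 ^ card ι * (errorsOfWeight Λ ι F t).ncard) := by
        gcongr
        · exact one_le_two
        · omega
        · exact ncard_errorsOfWeight_ge (by omega)
    _ = 8 ^ card ι * (errorsOfWeight Λ ι F t).ncard := by
        rw [← mul_assoc, ← mul_pow]
        norm_num

end Codewords

end InterleavedRS

open InterleavedRS

/-- For the IRS code under the uniform random error model with t ≤ N-K-1 error columns,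
the probability of undetected error of any ML-certificate decoder (upper bounded by the
fraction of bad error matrices) tends to 0 as q^L → ∞. -/
theorem IRS_undetected_error_vanishes (N K L t : ℕ) (hL : 1 ≤ L) (hKN : K < N)
    (ht : t ≤ N - K - 1) :
    ∀ ε : ℝ, 0 < ε → ∃ Q : ℕ,
      ∀ (Fq : Type) [Field Fq] [Fintype Fq],
      ∀ α : Fin N → Fq, Function.Injective α →
      Q ≤ Fintype.card Fq ^ L →
      ∀ D : Matrix (Fin L) (Fin N) Fq,
        (∀ l, ∃ p : Fq[X], p.degree < (K : ℕ) ∧ ∀ i, D l i = p.eval (α i)) →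
        (({E : Matrix (Fin L) (Fin N) Fq |
            {i : Fin N | (fun l => E l i) ≠ 0}.ncard = t ∧
            ∃ D' : Matrix (Fin L) (Fin N) Fq,
              (∀ l, ∃ p : Fq[X], p.degree < (K : ℕ) ∧ ∀ i, D' l i = p.eval (α i)) ∧
              D' ≠ D ∧
              {i : Fin N | (fun l => (D + E) l i) ≠ (fun l => D' l i)}.ncard ≤ t}.ncard : ℝ) /
          ({E : Matrix (Fin L) (Fin N) Fq |
            {i : Fin N | (fun l => E l i) ≠ 0}.ncard = t}.ncard : ℝ)) ≤ ε := by
  intro ε hε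
  refine ⟨⌈(8 : ℝ) ^ N / ε⌉₊, fun Fq _ _ α hα hQ D hD => ?_⟩
  have : Nonempty (Fin L) := ⟨⟨0, hL⟩⟩
  have key := ncard_confusableErrors_mul_le_ncard_errorsOfWeight hα hD
    (t := t) (by rw [Fintype.card_fin]; omega)
  rw [Fintype.card_fin, Fintype.card_fin] at key
  change ((confusableErrors α K D t).ncard : ℝ) /
    (errorsOfWeight (Fin L) (Fin N) Fq t).ncard ≤ ε
  have hM : (8 : ℝ) ^ N ≤ ε * (Fintype.card Fq ^ L : ℕ) :=
    (div_le_iff₀' hε).mp ((Nat.le_ceil _).trans (by exact_mod_cast hQ))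
  have hMpos : (0 : ℝ) < (Fintype.card Fq ^ L : ℕ) := by positivity
  refine div_le_of_le_mul₀ (by positivity) hε.le (le_of_mul_le_mul_right ?_ hMpos)
  calc ((confusableErrors α K D t).ncard : ℝ) * (Fintype.card Fq ^ L : ℕ)
      ≤ 8 ^ N * (errorsOfWeight (Fin L) (Fin N) Fq t).ncard := by exact_mod_cast key
    _ ≤ ε * (Fintype.card Fq ^ L : ℕ) * (errorsOfWeight (Fin L) (Fin N) Fq t).ncard := by
        gcongr
    _ = ε * (errorsOfWeight (Fin L) (Fin N) Fq t).ncard * (Fintype.card Fq ^ L : ℕ) := by ring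
end

section
/- Let t ≤ (L/(L+1))(N-K) and let the error values e^(l)_{j_i} (i ∈ [t], l ∈ [L]) be i.i.d. standard Gaussian real random variables, and let α_{j_1},...,α_{j_t} be distinct nonzero reals. Then with probability 1 the stacked syndrome matrix S_L(t) has full column rank t; consequently the probability of failure of the collaborative Peterson / MSSR decoder is 0. -/
/-!
Write `S_L(t) = B(e) * (D * Y)`, where `B(e)` stacks the blocks `H F^(l)` and `D * Y` is
invertible (distinct nonzero `α`). The entries of `B(e)` are linear forms in the error values,
and `B(e)` has full column rank iff the Gram determinant `det (B(e)ᵀ B(e))`, a polynomial in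
the errors, does not vanish. This polynomial is nonzero: since `t ≤ L (N - K - t)`, each
error position `k` can be assigned its own row `φ k` of an `L × (N - K - t)` grid, and for
the 0/1 error pattern switching on position `k` in block `(φ k).1` only, each block of `B` is
a tall Vandermonde matrix with distinct nodes. Finally, by Fubini and induction on the number of
variables, the zero set of a nonzero real polynomial is null for every product of atomless
σ-finite measures, in particular for i.i.d. Gaussians.
-/

open MeasureTheory ProbabilityTheory Matrix

theorem Polynomial.ae_eval_ne_zero (μ : Measure ℝ) [NullSingletonClass μ] {p : Polynomial ℝ}
    (hp : p ≠ 0) : ∀ᵐ x ∂μ, p.eval x ≠ 0 :=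
  measure_eq_zero_iff_ae_notMem.1 <| (Polynomial.finite_setOfPred_isRoot hp).measure_zero μ

namespace MvPolynomial

theorem ae_eval_ne_zero_of_fin {n : ℕ} (μ : Fin n → Measure ℝ)
    [∀ i, SigmaFinite (μ i)] [∀ i, NullSingletonClass (μ i)] {p : MvPolynomial (Fin n) ℝ}
    (hp : p ≠ 0) : ∀ᵐ x ∂Measure.pi μ, eval x p ≠ 0 := by
  induction n with
  | zero =>
    obtain ⟨c, rfl⟩ := C_surjective (Fin 0) p
    exact .of_forall fun x => by simpa using hp
  | succ n ih =>
    set e := MeasurableEquiv.piFinSuccAbove (fun _ : Fin (n + 1) => ℝ) 0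
    set q := finSuccEquiv ℝ n p
    have hq : q ≠ 0 := by simpa [q] using hp
    have hcons (z : ℝ × (Fin n → ℝ)) : eval (e.symm z) p = (q.map (eval z.2)).eval z.1 := by
      rw [← eval_eq_eval_mv_eval', ← Fin.insertNth_zero']
      rfl
    rw [← (measurePreserving_piFinSuccAbove μ 0).symm.map_eq,
      e.symm.measurableEmbedding.ae_map_iff, Measure.ae_prod_iff_ae_ae, Measure.ae_ae_comm]
    · -- off the null zero set of the leading coefficient, the slice is a nonzero polynomial
      filter_upwards [ih _ (Polynomial.leadingCoeff_ne_zero.2 hq)] with x hx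
      have hqx : q.map (eval x) ≠ 0 := fun h => hx <| by
        simpa using congrArg (Polynomial.coeff · q.natDegree) h
      simpa only [hcons] using Polynomial.ae_eval_ne_zero (μ 0) hqx
    all_goals exact e.symm.measurable <|
      (measurableSet_singleton 0).compl.preimage (continuous_eval p).measurable

theorem ae_eval_ne_zero {σ : Type*} [Fintype σ] (μ : σ → Measure ℝ)
    [∀ i, SigmaFinite (μ i)] [∀ i, NullSingletonClass (μ i)] {p : MvPolynomial σ ℝ}
    (hp : p ≠ 0) : ∀ᵐ x ∂Measure.pi μ, eval x p ≠ 0 := by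
  let e := (Fintype.equivFin σ).symm
  have hrename : rename e.symm p ≠ 0 :=
    (rename_injective _ e.symm.injective).ne_iff' (map_zero _) |>.2 hp
  have hcongr (y : Fin (Fintype.card σ) → ℝ) : MeasurableEquiv.piCongrLeft _ e y = y ∘ e.symm := by
    ext i
    simp [MeasurableEquiv.coe_piCongrLeft, Equiv.piCongrLeft_apply_eq_cast]
  rw [← (measurePreserving_piCongrLeft μ e).map_eq,
    (MeasurableEquiv.piCongrLeft _ e).measurableEmbedding.ae_map_iff]
  filter_upwards [ae_eval_ne_zero_of_fin (fun i => μ (e i)) hrename] with y hy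
  rwa [hcongr, ← eval_rename]

end MvPolynomial

theorem measurePreserving_curry_symm_pi {ι κ X : Type*} [Fintype ι] [Fintype κ]
    [MeasurableSpace X] (μ : ι → κ → Measure X) [∀ i j, IsProbabilityMeasure (μ i j)] :
    MeasurePreserving (MeasurableEquiv.curry ι κ X).symm
      (Measure.pi fun i => Measure.pi fun j => μ i j) (Measure.pi fun p : ι × κ => μ p.1 p.2) :=
  ⟨by fun_prop, by simpa [Measure.infinitePi_eq_pi] using Measure.infinitePi_map_curry_symm μ⟩

namespace Matrix

theorem det_transpose_mul_self_ne_zero {m n R : Type*} [Fintype m] [Fintype n]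
    [DecidableEq n] [Field R] [LinearOrder R] [IsStrictOrderedRing R] {A : Matrix m n R}
    (hA : Function.Injective A.mulVec) : (Aᵀ * A).det ≠ 0 := by
  rw [← isUnit_iff_ne_zero, ← isUnit_iff_isUnit_det, ← mulVec_injective_iff_isUnit,
    ← coe_mulVecLin, ← LinearMap.ker_eq_bot, ker_mulVecLin_transpose_mul_self,
    LinearMap.ker_eq_bot]
  exact hA

theorem ae_rank_map_eval_eq_card {σ m n : Type*} [Fintype σ] [Fintype m] [Fintype n]
    [DecidableEq n] (μ : σ → Measure ℝ) [∀ i, SigmaFinite (μ i)] [∀ i, NullSingletonClass (μ i)]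
    (M : Matrix m n (MvPolynomial σ ℝ)) {x₀ : σ → ℝ}
    (hx₀ : Function.Injective (M.map (MvPolynomial.eval x₀)).mulVec) :
    ∀ᵐ x ∂Measure.pi μ, (M.map (MvPolynomial.eval x)).rank = Fintype.card n := by
  have heval (x : σ → ℝ) : MvPolynomial.eval x (Mᵀ * M).det =
      ((M.map (MvPolynomial.eval x))ᵀ * M.map (MvPolynomial.eval x)).det := by
    rw [RingHom.map_det, RingHom.mapMatrix_apply, Matrix.map_mul, transpose_map]
  have hdet : (Mᵀ * M).det ≠ 0 := fun h =>
    det_transpose_mul_self_ne_zero hx₀ (by rw [← heval, h, map_zero])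
  filter_upwards [MvPolynomial.ae_eval_ne_zero μ hdet] with x hx
  rw [← rank_transpose_mul_self, rank_of_det_ne_zero (by rwa [← heval])]

end Matrix

theorem Finset.eq_zero_of_forall_sum_mul_pow_eq_zero {ι K : Type*} [Field K] {s : Finset ι}
    {β c : ι → K} {m : ℕ} (hβ : Set.InjOn β s) (hs : s.card ≤ m)
    (h : ∀ j < m, ∑ k ∈ s, c k * β k ^ j = 0) : ∀ k ∈ s, c k = 0 := by
  classical
  intro k hk
  -- pair the relations with the coefficients of the Lagrange basis polynomial at `k`
  set P := Lagrange.basis s β k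
  have hdeg : P.natDegree < m := by
    rw [Lagrange.natDegree_basis hβ hk]
    have := Finset.card_pos.2 ⟨k, hk⟩
    omega
  calc c k = ∑ k' ∈ s, c k' * P.eval (β k') := by
        rw [Finset.sum_eq_single_of_mem k hk, Lagrange.eval_basis_self hβ hk, mul_one]
        intro k' hk' hne
        rw [Lagrange.eval_basis_of_ne hne.symm hk', mul_zero]
    _ = ∑ j ∈ Finset.range (P.natDegree + 1), P.coeff j * ∑ k' ∈ s, c k' * β k' ^ j := by
        simp only [Polynomial.eval_eq_sum_range, Finset.mul_sum]
        rw [Finset.sum_comm]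
        exact Finset.sum_congr rfl fun _ _ => Finset.sum_congr rfl fun _ _ => by ring
    _ = 0 := Finset.sum_eq_zero fun j hj => by
        rw [h j (by rw [Finset.mem_range] at hj; omega), mul_zero]

/-- The blocks `H F^(l)` of the stacked syndrome matrix, row `(l, i)` and column `k`, with the
error value `e^(l)_k` as the indeterminate `X (l, k)`. -/
noncomputable def stackedSyndromePoly {ι κ K : Type*} [CommRing K] (α : κ → K) (m : ℕ) :
    Matrix (ι × Fin m) κ (MvPolynomial (ι × κ) K) :=
  of fun p k => MvPolynomial.C (α k ^ (p.2 : ℕ)) * MvPolynomial.X (p.1, k)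

theorem stackedSyndrome_eq_map_eval_mul {ι κ ν K : Type*} [Fintype κ] [DecidableEq κ]
    [CommRing K] (α : κ → K) (m : ℕ) (e : ι → κ → K) (Y : Matrix κ ν K) :
    (of fun (p : ι × Fin m) b =>
      ((of fun (i : Fin m) k => α k ^ (i : ℕ)) * diagonal (e p.1) * diagonal α * Y) p.2 b) =
    (stackedSyndromePoly α m).map (MvPolynomial.eval (Function.uncurry e)) * (diagonal α * Y) := by
  ext p b
  simp only [of_apply, Matrix.mul_assoc, mul_apply (M := of _), mul_apply (M := map _ _),
    diagonal_mul, stackedSyndromePoly, map_apply, map_mul, MvPolynomial.eval_C,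
    MvPolynomial.eval_X, Function.uncurry_apply_pair, mul_assoc]

theorem injective_mulVec_stackedSyndromePoly {ι κ K : Type*} [Fintype κ] [DecidableEq ι]
    [Field K] {α : κ → K} (hα : Function.Injective α) {m : ℕ} (φ : κ ↪ ι × Fin m) :
    Function.Injective ((stackedSyndromePoly (ι := ι) α m).map
      (MvPolynomial.eval fun q => if (φ q.2).1 = q.1 then 1 else 0)).mulVec := by
  rw [← coe_mulVecLin, injective_iff_map_eq_zero]
  intro c hc
  ext k
  let s := Finset.univ.filter fun k' => (φ k').1 = (φ k).1
  have hcard : s.card ≤ m := by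
    refine (Finset.card_le_card_of_injOn (fun k' => (φ k').2)
      (fun _ _ => Finset.mem_coe.2 (Finset.mem_univ _))
      fun k₁ hk₁ k₂ hk₂ h => φ.injective (Prod.ext ?_ h)).trans (Finset.card_fin m).le
    simp only [s, Finset.coe_filter, Set.mem_ofPred_eq, Finset.mem_univ, true_and] at hk₁ hk₂
    rw [hk₁, hk₂]
  refine Finset.eq_zero_of_forall_sum_mul_pow_eq_zero hα.injOn hcard (fun j hj => ?_) k
    (by simp [s])
  simpa [mulVec, dotProduct, stackedSyndromePoly, s, Finset.sum_filter, mul_comm] using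
    congrFun hc ((φ k).1, ⟨j, hj⟩)

theorem gaussian_stacked_syndrome_full_rank_as_general (N K L t : ℕ)
    (ht : t * (L + 1) ≤ L * (N - K))
    (α : Fin t → ℝ) (hα : Function.Injective α) (hα0 : ∀ k, α k ≠ 0) :
    Measure.pi (fun _ : Fin L => Measure.pi fun _ : Fin t => gaussianReal 0 1)
      {e : Fin L → Fin t → ℝ |
        (Matrix.of fun (p : Fin L × Fin (N - K - t)) (b : Fin t) =>
          ((Matrix.of fun (i : Fin (N - K - t)) (k : Fin t) => α k ^ (i : ℕ)) *
            Matrix.diagonal (e p.1) * Matrix.diagonal α *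
            Matrix.of fun (i k : Fin t) => α i ^ (k : ℕ)) p.2 b).rank < t} = 0 := by
  set m := N - K - t
  have htm : t ≤ L * m := by
    rw [Nat.mul_sub]
    have : t * (L + 1) = L * t + t := by ring
    omega
  let φ : Fin t ↪ Fin L × Fin m := (Fin.castLEEmb htm).trans finProdFinEquiv.symm.toEmbedding
  have hunit : IsUnit (diagonal α * of fun (i k : Fin t) => α i ^ (k : ℕ)).det := by
    rw [det_mul, isUnit_iff_ne_zero, det_diagonal]
    exact mul_ne_zero (Finset.prod_ne_zero_iff.2 fun k _ => hα0 k)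
      (det_vandermonde_ne_zero_iff.2 hα)
  have := nullSingletonClass_gaussianReal (μ := 0) one_ne_zero
  have hae := ae_rank_map_eval_eq_card (fun _ => gaussianReal 0 1) (stackedSyndromePoly α m)
    (injective_mulVec_stackedSyndromePoly hα φ)
  refine measure_mono_null (fun e he => ?_)
    (((measurePreserving_curry_symm_pi fun _ _ => gaussianReal 0 1).measure_preimage_equiv _).trans
      (ae_iff.1 hae))
  rw [Set.mem_ofPred_eq, stackedSyndrome_eq_map_eval_mul,
    rank_mul_eq_left_of_isUnit_det _ _ hunit] at he
  simpa [MeasurableEquiv.coe_curry_symm] using he.ne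

/-- Under the Gaussian random error model, for t ≤ (L/(L+1))(N-K), the stacked syndrome
matrix S_L(t) = [H^(l) F^(l) D Y]_l has full column rank t with probability 1; hence the
probability of failure of the collaborative Peterson / MSSR decoder is 0. -/
theorem gaussian_stacked_syndrome_full_rank_as (N K L t : ℕ) (hK : K < N) (hL : 1 ≤ L)
    (ht : t * (L + 1) ≤ L * (N - K))
    (α : Fin t → ℝ) (hα : Function.Injective α) (hα0 : ∀ k, α k ≠ 0) :
    Measure.pi (fun _ : Fin L => Measure.pi fun _ : Fin t => gaussianReal 0 1)
      {e : Fin L → Fin t → ℝ |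
        (Matrix.of fun (p : Fin L × Fin (N - K - t)) (b : Fin t) =>
          ((Matrix.of fun (i : Fin (N - K - t)) (k : Fin t) => α k ^ (i : ℕ)) *
            Matrix.diagonal (e p.1) * Matrix.diagonal α *
            Matrix.of fun (i k : Fin t) => α i ^ (k : ℕ)) p.2 b).rank < t} = 0 :=
  gaussian_stacked_syndrome_full_rank_as_general N K L t ht α hα hα0
end

section
/- Let Φ_w be the w × ρL real matrix whose column indexed by (k,l), k ∈ [ρ], l ∈ [L], has i-th entry α_i^{k-1} f_{i,l}, where α_1,...,α_w are distinct nonzero reals and ρ < w. If there exists a nonzero u ∈ R^{ρL} with Φ_w u = 0, then some entry f_{i,l₀} of the matrix (f_{i,l}) is determined as an affine function (with at least one nonzero coefficient on it) of the other entries; consequently, when the f_{i,l} are i.i.d. Gaussian, the event that Φ_w has nontrivial right null space and rank(Φ_w) ≤ w - 1 has probability zero. -/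
open MeasureTheory ProbabilityTheory

lemma hyper (n : ℕ) (φ : (Fin n → ℝ) →ₗ[ℝ] ℝ) (hφ : φ ≠ 0) :
    Measure.pi (fun _ : Fin n => gaussianReal 0 1) {x | φ x = 0} = 0 := by
  have hsingle : ∃ i, φ (Pi.single i 1) ≠ 0 := by
    by_contra h
    push_neg at h
    apply hφ
    apply LinearMap.ext
    intro x
    have hx : x = ∑ i, Pi.single i (x i) := by
      simp [Finset.univ_sum_single]
    rw [hx, map_sum]
    simp only [LinearMap.zero_apply]
    refine Finset.sum_eq_zero fun i _ => ?_
    have : Pi.single i (x i) = x i • (Pi.single i (1:ℝ) : Fin n → ℝ) := by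
      funext j
      simp [Pi.single_apply, mul_ite]
    rw [this, φ.map_smul, h i, smul_zero]
  obtain ⟨i, ha⟩ := hsingle
  match n, i, φ, ha with
  | n+1, i, φ, ha =>
  set a := φ (Pi.single i 1) with hadef
  set e := MeasurableEquiv.piFinSuccAbove (fun _ : Fin (n+1) => ℝ) i with he
  have hmp := measurePreserving_piFinSuccAbove (fun _ : Fin (n+1) => gaussianReal 0 1) i
  have hφc : Continuous φ := φ.continuous_of_finiteDimensional
  have hS : MeasurableSet {x : Fin (n+1) → ℝ | φ x = 0} :=
    (isClosed_eq hφc continuous_const).measurableSet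
  have key : Measure.pi (fun _ : Fin (n+1) => gaussianReal 0 1) {x | φ x = 0}
      = ((gaussianReal 0 1).prod (Measure.pi fun _ : Fin n => gaussianReal 0 1))
        (e.symm ⁻¹' {x | φ x = 0}) :=
    ((hmp.symm e).measure_preimage_equiv _).symm
  rw [key]
  have hsplit : ∀ (t : ℝ) (y : Fin n → ℝ),
      φ (Fin.insertNth (α := fun _ => ℝ) i t y)
        = t * a + φ (Fin.insertNth (α := fun _ => ℝ) i 0 y) := by
    intro t y
    have h1 : Fin.insertNth (α := fun _ => ℝ) i t y
        = Pi.single i t + Fin.insertNth (α := fun _ => ℝ) i 0 y := by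
      funext j
      refine Fin.succAboveCases i ?_ ?_ j
      · simp
      · intro k
        simp [Fin.insertNth_apply_succAbove, Pi.single_eq_of_ne (Fin.succAbove_ne i k)]
    rw [h1, map_add]
    congr 1
    have h2 : (Pi.single i t : Fin (n+1) → ℝ) = t • (Pi.single i (1:ℝ) : Fin (n+1) → ℝ) := by
      funext j
      simp [Pi.single_apply, mul_ite]
    rw [h2, φ.map_smul, smul_eq_mul]
  have hpre : MeasurableSet (e.symm ⁻¹' {x : Fin (n+1) → ℝ | φ x = 0}) :=
    e.symm.measurable hS
  rw [Measure.prod_apply_symm hpre]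
  have hzero : ∀ y : Fin n → ℝ,
      gaussianReal 0 1 ((fun t => (t, y)) ⁻¹' (e.symm ⁻¹' {x | φ x = 0})) = 0 := by
    intro y
    have hset : (fun t => (t, y)) ⁻¹' (e.symm ⁻¹' {x | φ x = 0})
        = {(- φ (Fin.insertNth (α := fun _ => ℝ) i 0 y)) / a} := by
      ext t
      simp only [Set.mem_preimage, Set.mem_setOf_eq, he,
        MeasurableEquiv.piFinSuccAbove_symm_apply, Fin.insertNthEquiv, Equiv.coe_fn_mk, Set.mem_singleton_iff]
      rw [hsplit t y, eq_div_iff ha]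
      constructor <;> intro h <;> linarith
    rw [hset]
    exact (gaussianReal_absolutelyContinuous 0 one_ne_zero) (measure_singleton _)
  calc (∫⁻ y, gaussianReal 0 1 ((fun t => (t, y)) ⁻¹' (e.symm ⁻¹' {x | φ x = 0}))
          ∂(Measure.pi fun _ : Fin n => gaussianReal 0 1))
      = ∫⁻ _, 0 ∂(Measure.pi fun _ : Fin n => gaussianReal 0 1) :=
        lintegral_congr hzero
    _ = 0 := lintegral_zero

lemma multi_zero (L : ℕ) : ∀ (w : ℕ)
    (g : MultilinearMap ℝ (fun _ : Fin w => (Fin L → ℝ)) ℝ),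
    Continuous g → (∃ f, g f ≠ 0) →
    Measure.pi (fun _ : Fin w => Measure.pi fun _ : Fin L => gaussianReal 0 1)
      {f | g f = 0} = 0 := by
  intro w
  induction w with
  | zero =>
    intro g _ ⟨f₀, hf₀⟩
    have : {f : Fin 0 → (Fin L → ℝ) | g f = 0} = ∅ := by
      ext f
      simp only [Set.mem_setOf_eq, Set.mem_empty_iff_false, iff_false]
      rw [Subsingleton.elim f f₀]
      exact hf₀
    rw [this, measure_empty]
  | succ w ih =>
    intro g hg ⟨f₀, hf₀⟩
    set ν := Measure.pi (fun _ : Fin L => gaussianReal 0 1) with hν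
    set e := MeasurableEquiv.piFinSuccAbove (fun _ : Fin (w+1) => (Fin L → ℝ)) 0 with he
    have hmp := measurePreserving_piFinSuccAbove (fun _ : Fin (w+1) => ν) 0
    have hS : MeasurableSet {f : Fin (w+1) → (Fin L → ℝ) | g f = 0} :=
      (isClosed_eq hg continuous_const).measurableSet
    have key : Measure.pi (fun _ : Fin (w+1) => ν) {f | g f = 0}
        = (ν.prod (Measure.pi fun _ : Fin w => ν)) (e.symm ⁻¹' {f | g f = 0}) :=
      ((hmp.symm e).measure_preimage_equiv _).symm
    rw [key, Measure.prod_apply (e.symm.measurable hS)]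
    -- the linear map x ↦ g (cons x (tail f₀))
    set r₀ : Fin w → (Fin L → ℝ) := Fin.tail f₀ with hr₀
    set φ : (Fin L → ℝ) →ₗ[ℝ] ℝ :=
      { toFun := fun x => g.curryLeft x r₀
        map_add' := by
          intro x y
          show g.curryLeft (x + y) r₀ = g.curryLeft x r₀ + g.curryLeft y r₀
          rw [map_add]; rfl
        map_smul' := by
          intro c x
          show g.curryLeft (c • x) r₀ = c • g.curryLeft x r₀
          rw [LinearMap.map_smul]; rfl } with hφ
    have hφne : φ ≠ 0 := by
      intro h
      apply hf₀
      have : φ (f₀ 0) = 0 := by rw [h]; rfl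
      rwa [hφ, LinearMap.coe_mk, AddHom.coe_mk, MultilinearMap.curryLeft_apply,
        Fin.cons_self_tail] at this
    have hN := hyper L φ hφne
    have hcons : ∀ x : Fin L → ℝ, Continuous (fun rest : Fin w → (Fin L → ℝ) =>
        (Fin.cons x rest : Fin (w+1) → (Fin L → ℝ))) := by
      intro x
      apply continuous_pi
      intro j
      refine Fin.cases ?_ ?_ j
      · simpa using continuous_const
      · intro k
        simpa using continuous_apply k
    have hzero : ∀ᵐ x ∂ν,
        (Measure.pi fun _ : Fin w => ν) (Prod.mk x ⁻¹' (e.symm ⁻¹' {f | g f = 0})) = 0 := by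
      refine (ae_iff.2 ?_)
      have hsub : {x | ¬ (Measure.pi fun _ : Fin w => ν)
            (Prod.mk x ⁻¹' (e.symm ⁻¹' {f | g f = 0})) = 0} ⊆ {x | φ x = 0} := by
        intro x hx
        simp only [Set.mem_setOf_eq] at hx ⊢
        by_contra hxne
        apply hx
        have hset : Prod.mk x ⁻¹' (e.symm ⁻¹' {f | g f = 0})
            = {rest | (g.curryLeft x) rest = 0} := by
          ext rest
          simp only [Set.mem_preimage, Set.mem_setOf_eq, he,
            MeasurableEquiv.piFinSuccAbove_symm_apply, Fin.insertNthEquiv,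
            Equiv.coe_fn_mk, Fin.insertNth_zero', MultilinearMap.curryLeft_apply]
        rw [hset]
        refine ih (g.curryLeft x) ?_ ⟨r₀, hxne⟩
        have : ⇑(g.curryLeft x) = fun rest => g (Fin.cons x rest) := by
          funext rest; exact MultilinearMap.curryLeft_apply g x rest
        rw [this]
        exact hg.comp (hcons x)
      exact measure_mono_null hsub hN
    calc (∫⁻ x, (Measure.pi fun _ : Fin w => ν)
            (Prod.mk x ⁻¹' (e.symm ⁻¹' {f | g f = 0})) ∂ν)
        = ∫⁻ _, 0 ∂ν := lintegral_congr_ae hzero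
      _ = 0 := lintegral_zero




/-- For i.i.d. Gaussian entries f_{i,l}, the event that the structured matrix Φ_w
(columns α_i^{k-1} f_{i,l}) has a nontrivial right null space and rank ≤ w-1 has
probability zero. -/
theorem phi_matrix_rank_deficient_prob_zero (w ρ L : ℕ) (hρ : ρ < w) (hw : w ≤ ρ * L)
    (α : Fin w → ℝ) (hα : Function.Injective α) (hα0 : ∀ i, α i ≠ 0) :
    Measure.pi (fun _ : Fin w => Measure.pi fun _ : Fin L => gaussianReal 0 1)
      {f : Fin w → Fin L → ℝ |
        (∃ u : Fin ρ × Fin L → ℝ, u ≠ 0 ∧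
          (Matrix.of fun (i : Fin w) (p : Fin ρ × Fin L) =>
            α i ^ (p.1 : ℕ) * f i p.2).mulVec u = 0) ∧
        (Matrix.of fun (i : Fin w) (p : Fin ρ × Fin L) =>
          α i ^ (p.1 : ℕ) * f i p.2).rank ≤ w - 1} = 0 := by
  have hw0 : 0 < w := lt_of_le_of_lt (Nat.zero_le ρ) hρ
  have hρ0 : 0 < ρ := by
    rcases Nat.eq_zero_or_pos ρ with h | h
    · subst h; simp at hw; omega
    · exact h
  -- column selection
  set c : Fin w → Fin ρ × Fin L := fun j =>
    (⟨(j : ℕ) % ρ, Nat.mod_lt _ hρ0⟩,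
     ⟨(j : ℕ) / ρ, (Nat.div_lt_iff_lt_mul hρ0).2 (lt_of_lt_of_le j.isLt (hw.trans_eq (Nat.mul_comm ρ L)))⟩) with hc
  set A : Fin w → ((Fin L → ℝ) →ₗ[ℝ] (Fin w → ℝ)) := fun i =>
    LinearMap.pi (fun j => (α i ^ ((c j).1 : ℕ)) • LinearMap.proj ((c j).2)) with hA
  set g : MultilinearMap ℝ (fun _ : Fin w => (Fin L → ℝ)) ℝ :=
    (Matrix.detRowAlternating : (Fin w → ℝ) [⋀^Fin w]→ₗ[ℝ] ℝ).toMultilinearMap.compLinearMap A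
    with hgdef
  have hg_eq : ∀ f : Fin w → Fin L → ℝ,
      g f = (Matrix.of fun i j => α i ^ (((c j).1 : Fin ρ) : ℕ) * f i ((c j).2)).det := by
    intro f
    rw [hgdef, MultilinearMap.compLinearMap_apply]
    congr 1
  have hgc : Continuous g := by
    have : ⇑g = fun f : Fin w → Fin L → ℝ =>
        (Matrix.of fun i j => α i ^ (((c j).1 : Fin ρ) : ℕ) * f i ((c j).2)).det := by
      funext f; exact hg_eq f
    rw [this]
    apply Continuous.matrix_det
    apply continuous_matrix
    intro i j
    exact continuous_const.mul ((continuous_apply ((c j).2)).comp (continuous_apply i))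
  -- the witness
  have hwitness : ∃ f, g f ≠ 0 := by
    refine ⟨fun i l => α i ^ (ρ * (l : ℕ)), ?_⟩
    rw [hg_eq]
    have : (Matrix.of fun i j => α i ^ (((c j).1 : Fin ρ) : ℕ)
          * (α i ^ (ρ * (((c j).2 : Fin L) : ℕ))))
        = Matrix.vandermonde α := by
      ext i j
      rw [Matrix.of_apply, Matrix.vandermonde_apply, ← pow_add]
      congr 1
      simp only [hc]
      exact Nat.mod_add_div _ _
    rw [this, Matrix.det_vandermonde]
    refine Finset.prod_ne_zero_iff.2 fun i _ => Finset.prod_ne_zero_iff.2 fun j hj => ?_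
    exact sub_ne_zero.2 fun h => absurd (hα h) (Finset.mem_Ioi.1 hj).ne'
  -- event is contained in the zero set of g
  refine measure_mono_null ?_ (multi_zero L w g hgc hwitness)
  intro f hf
  obtain ⟨-, hrank⟩ := hf
  simp only [Set.mem_setOf_eq]
  by_contra hne
  set Φ : Matrix (Fin w) (Fin ρ × Fin L) ℝ :=
    Matrix.of fun (i : Fin w) (p : Fin ρ × Fin L) => α i ^ (p.1 : ℕ) * f i p.2 with hΦ
  set M : Matrix (Fin w) (Fin w) ℝ :=
    Matrix.of fun i j => α i ^ (((c j).1 : Fin ρ) : ℕ) * f i ((c j).2) with hM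
  have hdet : M.det ≠ 0 := by rwa [hg_eq] at hne
  have hMrank : M.rank = w := by
    rw [Matrix.rank_of_isUnit M ((Matrix.isUnit_iff_isUnit_det M).2 (isUnit_iff_ne_zero.2 hdet))]
    simp
  set E : Matrix (Fin ρ × Fin L) (Fin w) ℝ :=
    Matrix.of fun q j => if q = c j then (1:ℝ) else 0 with hE
  have hME : M = Φ * E := by
    ext i j
    simp only [hM, hE, hΦ, Matrix.mul_apply, Matrix.of_apply, mul_ite, mul_one, mul_zero,
      Finset.sum_ite_eq', Finset.mem_univ, if_true]
  have hrankle : M.rank ≤ Φ.rank := by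
    rw [hME]; exact Matrix.rank_mul_le_left Φ E
  have hΦrank : Φ.rank ≤ w - 1 := hrank
  omega
end

section
/- Under the Gaussian random error model for a real interleaved GRS code of length N and dimension K, for any t ≤ N - K - 1, with probability 1 the transmitted codeword is the unique codeword within column-Hamming distance t of the received matrix; hence any decoder with the ML certificate property has probability of undetected error equal to 0. -/
/-!
If a codeword `D' ≠ D` lies within column distance `t` of `R = D + E`, then `R` agrees with `D'`
on at least `N - t` columns. Off the error columns these are zero columns of the nonzero codeword
`D' - D`, so they form a set `Z` with `#Z < K`; on the error columns (indexed by `A`) the error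
equals `D' - D`. Hence the first row of the error, restricted to `A`, is the vector of values
`v (j k) * q (α (j k))` of a polynomial `q` of degree `< K` vanishing on `α '' Z`, and
`K - #Z < #A` by counting. These `q` form a space of dimension `K - #Z` (Lagrange
interpolation), so such errors lie in a proper subspace, which is Lebesgue-null and therefore
Gaussian-null. There are finitely many choices of `(Z, A)`.
-/

open MeasureTheory ProbabilityTheory Polynomial
open Finset

theorem MeasureTheory.Measure.AbsolutelyContinuous.pi_fin {n : ℕ} {X : Fin n → Type*}
    [∀ i, MeasurableSpace (X i)] {μ ν : ∀ i, Measure (X i)}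
    [∀ i, SigmaFinite (μ i)] [∀ i, SigmaFinite (ν i)]
    (h : ∀ i, μ i ≪ ν i) : Measure.pi μ ≪ Measure.pi ν := by
  induction n with
  | zero => rw [Measure.pi_of_empty μ, Measure.pi_of_empty ν]
  | succ n ih =>
    have hprod := ((h 0).prod (ih fun i => h (Fin.succAbove 0 i))).map
      (MeasurableEquiv.piFinSuccAbove X 0).symm.measurable
    rwa [((measurePreserving_piFinSuccAbove μ 0).symm _).map_eq,
      ((measurePreserving_piFinSuccAbove ν 0).symm _).map_eq] at hprod

theorem MeasureTheory.Measure.AbsolutelyContinuous.pi {ι : Type*} [Fintype ι]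
    {X : ι → Type*} [∀ i, MeasurableSpace (X i)] {μ ν : ∀ i, Measure (X i)}
    [∀ i, SigmaFinite (μ i)] [∀ i, SigmaFinite (ν i)]
    (h : ∀ i, μ i ≪ ν i) : Measure.pi μ ≪ Measure.pi ν := by
  set f := (Fintype.equivFin ι).symm
  have hfin := (AbsolutelyContinuous.pi_fin (X := fun i => X (f i)) fun i => h (f i)).map
    (MeasurableEquiv.piCongrLeft X f).measurable
  rwa [(measurePreserving_piCongrLeft μ f).map_eq,
    (measurePreserving_piCongrLeft ν f).map_eq] at hfin

theorem gaussianReal_pi_pi_absolutelyContinuous {ι κ : Type*} [Fintype ι] [Fintype κ]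
    (m : ℝ) {v : NNReal} (hv : v ≠ 0) :
    Measure.pi (fun _ : ι => Measure.pi fun _ : κ => gaussianReal m v) ≪ volume := by
  rw [volume_pi]
  refine Measure.AbsolutelyContinuous.pi fun _ => ?_
  rw [volume_pi]
  exact Measure.AbsolutelyContinuous.pi fun _ => gaussianReal_absolutelyContinuous m hv

namespace Polynomial

variable {F ι : Type*} [Field F]

noncomputable def evalAtNodes (K : ℕ) (α : ι → F) (Z : Finset ι) : degreeLT F K →ₗ[F] (Z → F) :=
  LinearMap.pi fun z => (leval (α z)).comp (degreeLT F K).subtype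

theorem evalAtNodes_surjective {K : ℕ} {α : ι → F} {Z : Finset ι} (hα : Set.InjOn α Z)
    (hZ : #Z ≤ K) : Function.Surjective (evalAtNodes K α Z) := by
  classical
  exact fun f => ⟨⟨_, degreeLT_mono hZ ((Lagrange.funEquivDegreeLT hα).symm f).2⟩,
    (Lagrange.funEquivDegreeLT hα).apply_symm_apply f⟩

theorem finrank_degreeLT (K : ℕ) : Module.finrank F (degreeLT F K) = K := by
  rw [(degreeLTEquiv F K).finrank_eq, Module.finrank_fin_fun]

theorem finrank_ker_evalAtNodes {K : ℕ} {α : ι → F} {Z : Finset ι} (hα : Set.InjOn α Z)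
    (hZ : #Z ≤ K) : Module.finrank F (LinearMap.ker (evalAtNodes K α Z)) = K - #Z := by
  have : Module.Finite F (degreeLT F K) := .equiv (degreeLTEquiv F K).symm
  have h := LinearMap.finrank_range_add_finrank_ker (evalAtNodes K α Z)
  rw [LinearMap.range_eq_top.2 (evalAtNodes_surjective hα hZ), finrank_top,
    Module.finrank_pi, Fintype.card_coe, finrank_degreeLT] at h
  omega

end Polynomial

theorem gaussianReal_pi_pi_null_of_interpolation {ι τ κ : Type*} [Fintype τ] [Fintype κ]
    (m : ℝ) {v : NNReal} (hv : v ≠ 0) {K : ℕ} {α : ι → ℝ} {Z : Finset ι}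
    (hα : Set.InjOn α Z) (hZ : #Z ≤ K) (w c : τ → ℝ) {A : Finset τ} (hA : K - #Z < #A)
    (l₀ : κ) :
    Measure.pi (fun _ : τ => Measure.pi fun _ : κ => gaussianReal m v)
      {e | ∃ p : ℝ[X], p.degree < K ∧ (∀ i ∈ Z, p.eval (α i) = 0) ∧
        ∀ k ∈ A, e k l₀ = c k * p.eval (w k)} = 0 := by
  classical
  let G : degreeLT ℝ K →ₗ[ℝ] (A → ℝ) :=
    LinearMap.pi fun k => c k • (leval (w k)).comp (degreeLT ℝ K).subtype
  let π : (τ → κ → ℝ) →ₗ[ℝ] (A → ℝ) :=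
    LinearMap.pi fun k => (LinearMap.proj (R := ℝ) (φ := fun _ : κ => ℝ) l₀).comp
      (LinearMap.proj (R := ℝ) (φ := fun _ : τ => κ → ℝ) k.1)
  let W := (LinearMap.ker (evalAtNodes K α Z)).map G
  have hW : W ≠ ⊤ := by
    intro h
    have : Module.finrank ℝ W ≤ K - #Z :=
      (Submodule.finrank_map_le G _).trans (finrank_ker_evalAtNodes hα hZ).le
    rw [h, finrank_top, Module.finrank_pi, Fintype.card_coe] at this
    omega
  have hπ : Function.Surjective π := fun u =>
    ⟨fun k _ => if h : k ∈ A then u ⟨k, h⟩ else 0, funext fun k => dif_pos k.2⟩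
  have hV : W.comap π ≠ ⊤ := fun h =>
    hW (Submodule.comap_injective_of_surjective hπ (h.trans (Submodule.comap_top π).symm))
  refine measure_mono_null ?_ (gaussianReal_pi_pi_absolutelyContinuous m hv
    (Measure.addHaar_submodule volume _ hV))
  rintro e ⟨p, hp_deg, hp_Z, hp_A⟩
  exact ⟨⟨p, mem_degreeLT.2 hp_deg⟩, funext fun z => hp_Z z z.2,
    funext fun k => (hp_A k k.2).symm⟩

theorem exists_agreement_of_ncard_le {G ρ : Type*} [AddCommGroup G] {N t : ℕ}
    {j : Fin t → Fin N} (hj : Function.Injective j) (D D' : ρ → Fin N → G) (e : Fin t → ρ → G)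
    (hdist : {i | ∃ l, (D l i + ∑ k, if j k = i then e k l else 0) ≠ D' l i}.ncard ≤ t) :
    ∃ (Z : Finset (Fin N)) (A : Finset (Fin t)), N - t ≤ #A + #Z ∧
      (∀ i ∈ Z, ∀ l, D' l i = D l i) ∧ ∀ k ∈ A, ∀ l, e k l = D' l (j k) - D l (j k) := by
  classical
  set R : ρ → Fin N → G := fun l i => D l i + ∑ k, if j k = i then e k l else 0
  have hR_off : ∀ i ∉ Set.range j, ∀ l, R l i = D l i := fun i hi l => by
    simp only [R, add_eq_left]
    exact sum_eq_zero fun k _ => if_neg fun h => hi ⟨k, h⟩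
  have hR_on : ∀ k l, R l (j k) = D l (j k) + e k l := fun k l => by simp [R, hj.eq_iff]
  set agree := univ.filter fun i => ∀ l, R l i = D' l i
  set Z := agree.filter (· ∉ Set.range j)
  set A := univ.filter fun k => j k ∈ agree
  refine ⟨Z, A, ?_, fun i hi l => ?_, fun k hk l => ?_⟩
  · have hdisagree : {i | ∃ l, R l i ≠ D' l i} = ↑agreeᶜ := by ext; simp [agree]
    rw [hdisagree, Set.ncard_coe_finset, card_compl, Fintype.card_fin] at hdist
    have hcover : agree ⊆ A.image j ∪ Z := fun i hi => by
      by_cases h : i ∈ Set.range j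
      · obtain ⟨k, rfl⟩ := h
        exact mem_union_left _ (mem_image_of_mem j (mem_filter.2 ⟨mem_univ k, hi⟩))
      · exact mem_union_right _ (mem_filter.2 ⟨hi, h⟩)
    have := (card_le_card hcover).trans ((card_union_le _ _).trans
      (Nat.add_le_add_right card_image_le _))
    omega
  · obtain ⟨hi_agree, hi_off⟩ := mem_filter.1 hi
    rw [← hR_off i hi_off l]
    exact ((mem_filter.1 hi_agree).2 l).symm
  · rw [← (mem_filter.1 (mem_filter.1 hk).2).2 l, hR_on]
    abel

theorem exists_error_interpolant_of_ncard_le {L N K t : ℕ} (hK : K < N) (ht : t ≤ N - K - 1)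
    (l₀ : Fin L) {α : Fin N → ℝ} (hα : Function.Injective α) {v : Fin N → ℝ} (hv : ∀ i, v i ≠ 0)
    {j : Fin t → Fin N} (hj : Function.Injective j) {D D' : Matrix (Fin L) (Fin N) ℝ}
    {p p' : Fin L → ℝ[X]} (hp : ∀ l, (p l).degree < K) (hp' : ∀ l, (p' l).degree < K)
    (hD : ∀ l i, D l i = v i * (p l).eval (α i)) (hD' : ∀ l i, D' l i = v i * (p' l).eval (α i))
    (hne : D' ≠ D) (e : Fin t → Fin L → ℝ)
    (hdist : {i | ∃ l, (D l i + ∑ k, if j k = i then e k l else 0) ≠ D' l i}.ncard ≤ t) :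
    ∃ (Z : Finset (Fin N)) (A : Finset (Fin t)), #Z ≤ K ∧ K - #Z < #A ∧
      ∃ q : ℝ[X], q.degree < K ∧ (∀ i ∈ Z, q.eval (α i) = 0) ∧
        ∀ k ∈ A, e k l₀ = v (j k) * q.eval (α (j k)) := by
  obtain ⟨Z, A, hcard, hZ, hA⟩ := exists_agreement_of_ncard_le hj D D' e hdist
  have hq_eval : ∀ l i, D' l i - D l i = v i * (p' l - p l).eval (α i) := fun l i => by
    rw [hD, hD', eval_sub, mul_sub]
  have hq_deg : ∀ l, (p' l - p l).degree < K := fun l =>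
    (degree_sub_le _ _).trans_lt (max_lt (hp' l) (hp l))
  have hq_Z : ∀ l, ∀ i ∈ Z, (p' l - p l).eval (α i) = 0 := fun l i hi => by
    have h := hq_eval l i
    rw [hZ i hi l, sub_self, eq_comm, mul_eq_zero] at h
    exact h.resolve_left (hv i)
  have hZ_lt : #Z < K := by
    by_contra! hKZ
    refine hne (Matrix.ext fun l i => sub_eq_zero.1 ?_)
    rw [hq_eval, eq_zero_of_degree_lt_of_eval_index_eq_zero Z hα.injOn
      ((hq_deg l).trans_le (by exact_mod_cast hKZ)) (hq_Z l), eval_zero, mul_zero]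
  have hA_card : K - #Z < #A := by omega
  exact ⟨Z, A, hZ_lt.le, hA_card, p' l₀ - p l₀, hq_deg l₀, hq_Z l₀,
    fun k hk => by rw [hA k hk, hq_eval]⟩

/-- Under the Gaussian random error model for a real interleaved GRS code, for
t ≤ N-K-1 errors, with probability 1 the transmitted codeword is the unique codeword
within column-Hamming distance t of the received matrix. -/
theorem real_IRS_unique_closest_codeword_as (N K L t : ℕ) (hK : K < N)
    (ht : t ≤ N - K - 1) (hL : 1 ≤ L)
    (α : Fin N → ℝ) (hα : Function.Injective α)
    (v : Fin N → ℝ) (hv : ∀ i, v i ≠ 0)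
    (C : Set (Matrix (Fin L) (Fin N) ℝ))
    (hC : C = {D | ∀ l, ∃ p : ℝ[X], p.degree < (K : ℕ) ∧
      ∀ i, D l i = v i * p.eval (α i)})
    (j : Fin t → Fin N) (hj : Function.Injective j)
    (D : Matrix (Fin L) (Fin N) ℝ) (hD : D ∈ C) :
    Measure.pi (fun _ : Fin t => Measure.pi fun _ : Fin L => gaussianReal 0 1)
      {e : Fin t → Fin L → ℝ |
        ∃ D' ∈ C, D' ≠ D ∧
          {i : Fin N | ∃ l, (D l i + ∑ k, if j k = i then e k l else 0) ≠ D' l i}.ncard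
            ≤ t} = 0 := by
  subst hC
  choose p hp_deg hp_eval using hD
  let l₀ : Fin L := ⟨0, hL⟩
  refine measure_mono_null (t := ⋃ (Z : Finset (Fin N)) (A : Finset (Fin t))
      (_ : #Z ≤ K ∧ K - #Z < #A), {e | ∃ q : ℝ[X], q.degree < K ∧
        (∀ i ∈ Z, q.eval (α i) = 0) ∧ ∀ k ∈ A, e k l₀ = v (j k) * q.eval (α (j k))}) ?_ ?_
  · rintro e ⟨D', hD', hne, hdist⟩
    choose p' hp'_deg hp'_eval using hD'
    obtain ⟨Z, A, hZ, hA, hq⟩ := exists_error_interpolant_of_ncard_le hK ht l₀ hα hv hj hp_deg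
      hp'_deg hp_eval hp'_eval hne e hdist
    exact Set.mem_iUnion₂.2 ⟨Z, A, Set.mem_iUnion.2 ⟨⟨hZ, hA⟩, hq⟩⟩
  · exact measure_iUnion_null fun Z => measure_iUnion_null fun A => measure_iUnion_null
      fun hZA => gaussianReal_pi_pi_null_of_interpolation 0 one_ne_zero hα.injOn hZA.1
        (fun k => α (j k)) (fun k => v (j k)) hZA.2 l₀
end
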